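/- The Malvenuto–Reutenauer product on k[S^∞] is associative, and the empty permutation (the unique element of S_0) is a two-sided unit for it. -/

import Mathlib

attribute [local instance] Classical.propDecidable

/-- `w` is a `(p, n-p)`-shuffle in `S_n`. -/
def IsShuffle (p : ℕ) {n : ℕ} (w : Equiv.Perm (Fin n)) : Prop :=
  ∀ a b : Fin n, a < b → ((b : ℕ) < p ∨ p ≤ (a : ℕ)) → w a < w b

/-- The block permutation `ρ × σ ∈ S_{p+q}`. -/
def blockPerm {p q : ℕ} (ρ : Equiv.Perm (Fin p)) (σ : Equiv.Perm (Fin q)) :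
    Equiv.Perm (Fin (p + q)) :=
  finSumFinEquiv.permCongr (Equiv.sumCongr ρ σ)

/-- Basis of `k[S^∞]`: permutations of all finite orders. -/
abbrev PermSigma : Type := Σ n : ℕ, Equiv.Perm (Fin n)

/-- The graded vector space `k[S^∞] = ⊕_{n ≥ 0} k[S_n]`. -/
abbrev MR (k : Type*) [Field k] : Type _ := PermSigma →₀ k

/-- The Malvenuto-Reutenauer product on basis elements:
`ρ ∗ σ = Σ_{w ∈ Sh(p,q)} w ∘ (ρ × σ)`. -/
noncomputable def mrBasisMul (k : Type*) [Field k] (x y : PermSigma) : MR k :=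
  ∑ w ∈ Finset.univ.filter
      (fun w : Equiv.Perm (Fin (x.1 + y.1)) => IsShuffle x.1 w),
    Finsupp.single ⟨x.1 + y.1, w * blockPerm x.2 y.2⟩ (1 : k)

/-- The Malvenuto-Reutenauer product, extended bilinearly to `k[S^∞]`. -/
noncomputable def mrMul (k : Type*) [Field k] (f g : MR k) : MR k :=
  f.sum fun x a => g.sum fun y b => (a * b) • mrBasisMul k x y

/-! A permutation `s ∈ S_{p+q}` is of the form `w ∘ (ρ × σ)` with `w ∈ Sh(p,q)` exactly when
its values on the first `p` positions are in the relative order `ρ` and those on the last `q`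
positions in the relative order `σ`; hence `ρ ∗ σ` is the sum of all such `s`. A word with distinct
letters has a unique standardization, so in `(ρ ∗ σ) ∗ τ` the sum over the intermediate
permutation collapses, and both `(ρ ∗ σ) ∗ τ` and `ρ ∗ (σ ∗ τ)` become the sum of all
`s ∈ S_{p+q+r}` whose three consecutive blocks of values are in the relative orders `ρ`, `σ`, `τ`.
The empty permutation is a unit because the identity is the only `(0,n)`- and `(n,0)`-shuffle. -/

open Equiv Finset Function Finsupp

section Pattern

variable {α : Type*} [LinearOrder α] {m : ℕ}

/-- `f` is order-isomorphic to `ρ`, i.e. `f i < f j ↔ ρ i < ρ j`: the word `f` standardizes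
to `ρ`. -/
def HasPattern (f : Fin m → α) (ρ : Perm (Fin m)) : Prop :=
  StrictMono (f ∘ ρ.symm)

theorem StrictMono.strictMono_comp_iff {β γ δ : Type*} [LinearOrder β] [Preorder γ]
    [Preorder δ] {F : β → γ} (hF : StrictMono F) {g : δ → β} : StrictMono (F ∘ g) ↔ StrictMono g :=
  ⟨fun h _ _ hab => hF.lt_iff_lt.mp (h hab), hF.comp⟩

theorem hasPattern_comp_iff {β : Type*} [LinearOrder β] {φ : α → β} (hφ : StrictMono φ)
    {f : Fin m → α} {ρ : Perm (Fin m)} : HasPattern (φ ∘ f) ρ ↔ HasPattern f ρ :=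
  hφ.strictMono_comp_iff (g := f ∘ ρ.symm)

theorem hasPattern_iff_eq_sort_symm {f : Fin m → α} (hf : Injective f) {u : Perm (Fin m)} :
    HasPattern f u ↔ u = (Tuple.sort f).symm := by
  have hinj : Injective (f ∘ u.symm) := hf.comp u.symm.injective
  calc HasPattern f u ↔ u.symm = Tuple.sort f := by
        rw [Tuple.eq_sort_iff, HasPattern]
        refine ⟨fun h => ⟨h.monotone, fun i j hij hfij => absurd (hinj hfij) hij.ne⟩,
          fun h => h.1.strictMono_of_injective hinj⟩
    _ ↔ u = (Tuple.sort f).symm :=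
        ⟨fun h => by rw [← h, symm_symm], fun h => by rw [h, symm_symm]⟩

theorem HasPattern.comp_iff {f : Fin m → α} {u : Perm (Fin m)} (h : HasPattern f u) {l : ℕ}
    (g : Fin l → Fin m) (ρ : Perm (Fin l)) :
    HasPattern (u ∘ g) ρ ↔ HasPattern (f ∘ g) ρ := by
  have hf : f ∘ g = (f ∘ u.symm) ∘ (u ∘ g) := by ext; simp
  rw [hf, hasPattern_comp_iff h]

theorem hasPattern_sort {f : Fin m → α} (hf : Injective f) :
    HasPattern f (Tuple.sort f).symm :=
  (hasPattern_iff_eq_sort_symm hf).2 rfl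

end Pattern

section Shuffle

variable {m r n : ℕ}

theorem isShuffle_iff {v : Perm (Fin (m + r))} :
    IsShuffle m v ↔ StrictMono (v ∘ Fin.castAdd r) ∧ StrictMono (v ∘ Fin.natAdd m) := by
  refine ⟨fun hv => ⟨fun i j hij => hv _ _ (by simpa) (Or.inl (by simp)),
    fun i j hij => hv _ _ (by simpa) (Or.inr (by simp))⟩, ?_⟩
  rintro ⟨hl, hr⟩ a b hab hblock
  induction a using Fin.addCases with
  | left i => induction b using Fin.addCases with
    | left j => exact hl (Fin.castSucc_lt_castSucc_iff.mp hab)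
    | right j => simp only [Fin.val_natAdd, Fin.val_castAdd] at hblock; omega
  | right i => induction b using Fin.addCases with
    | left j => simp only [Fin.lt_def, Fin.val_natAdd, Fin.val_castAdd] at hab; omega
    | right j => exact hr ((Fin.natAdd_lt_natAdd_iff m).mp hab)

theorem isShuffle_one (p : ℕ) : IsShuffle p (1 : Perm (Fin n)) :=
  fun _ _ hab _ => hab

theorem isShuffle_zero_iff {w : Perm (Fin n)} : IsShuffle 0 w ↔ w = 1 :=
  ⟨fun h => Equiv.ext fun _ =>
      StrictMono.apply_eq fun a b hab => h a b hab (Or.inr (Nat.zero_le _)),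
    fun h => h ▸ isShuffle_one 0⟩

theorem isShuffle_self_iff {w : Perm (Fin n)} : IsShuffle n w ↔ w = 1 :=
  ⟨fun h => Equiv.ext fun _ => StrictMono.apply_eq fun a b hab => h a b hab (Or.inl b.isLt),
    fun h => h ▸ isShuffle_one n⟩

@[simp]
theorem blockPerm_castAdd (ρ : Perm (Fin m)) (σ : Perm (Fin r)) (i : Fin m) :
    blockPerm ρ σ (Fin.castAdd r i) = Fin.castAdd r (ρ i) := by
  simp [blockPerm, permCongr_apply]

@[simp]
theorem blockPerm_natAdd (ρ : Perm (Fin m)) (σ : Perm (Fin r)) (j : Fin r) :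
    blockPerm ρ σ (Fin.natAdd m j) = Fin.natAdd m (σ j) := by
  simp [blockPerm, permCongr_apply]

end Shuffle

theorem sum_filter_sum_filter_hasPattern {M : Type*} [AddCommMonoid M] {m n : ℕ}
    {e : Fin m → Fin n} (he : Injective e) (P : Perm (Fin m) → Prop) (Q : Perm (Fin n) → Prop)
    (R : Perm (Fin m) → Perm (Fin n) → Prop) [DecidablePred P] [DecidablePred Q]
    [∀ u, DecidablePred (R u)] (hR : ∀ u s, R u s ↔ HasPattern (s ∘ e) u ∧ Q s)
    (F : Perm (Fin n) → M) :
    ∑ u ∈ univ.filter P, ∑ s ∈ univ.filter (R u), F s =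
      ∑ s ∈ univ.filter (fun s : Perm (Fin n) => P (Tuple.sort (s ∘ e)).symm ∧ Q s),
        F s := by
  rw [Finset.sum_comm' (s' := fun s : Perm (Fin n) => {(Tuple.sort (s ∘ e)).symm})
    (t' := univ.filter fun s : Perm (Fin n) => P (Tuple.sort (s ∘ e)).symm ∧ Q s)]
  · simp only [sum_singleton]
  · intro u s
    simp only [mem_filter, mem_univ, true_and, mem_singleton, hR,
      hasPattern_iff_eq_sort_symm (s.injective.comp he)]
    constructor
    · rintro ⟨hP, rfl, hQ⟩
      exact ⟨rfl, hP, hQ⟩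
    · rintro ⟨rfl, hP, hQ⟩
      exact ⟨hP, rfl, hQ⟩

section Product

variable (k : Type*) [Field k]

noncomputable def mrMulBilin : MR k →ₗ[k] MR k →ₗ[k] MR k :=
  linearCombination k fun x => linearCombination k (mrBasisMul k x)

theorem mrMul_eq_mrMulBilin (f g : MR k) : mrMul k f g = mrMulBilin k f g := by
  simp only [mrMul, mrMulBilin, linearCombination_apply, Finsupp.sum, LinearMap.sum_apply,
    LinearMap.smul_apply, Finset.smul_sum, smul_smul]

theorem mrMulBilin_single_single (x y : PermSigma) :
    mrMulBilin k (single x 1) (single y 1) = mrBasisMul k x y := by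
  simp [mrMulBilin]

theorem single_sigma_cast {n n' : ℕ} (h : n = n') (s : Perm (Fin n)) (c : k) :
    (single ⟨n, s⟩ c : MR k) = single ⟨n', (finCongr h).permCongr s⟩ c := by
  subst h
  rfl

theorem mrBasisMul_eq_sum_hasPattern {p q : ℕ} (ρ : Perm (Fin p)) (σ : Perm (Fin q)) :
    mrBasisMul k ⟨p, ρ⟩ ⟨q, σ⟩ =
      ∑ s ∈ univ.filter (fun s : Perm (Fin (p + q)) =>
          HasPattern (s ∘ Fin.castAdd q) ρ ∧ HasPattern (s ∘ Fin.natAdd p) σ),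
        single ⟨p + q, s⟩ 1 := by
  refine sum_equiv (Equiv.mulRight (blockPerm ρ σ)) (fun w => ?_) (fun _ _ => rfl)
  have hl : (⇑(w * blockPerm ρ σ) ∘ Fin.castAdd q) ∘ ρ.symm = w ∘ Fin.castAdd q := by
    ext; simp
  have hr : (⇑(w * blockPerm ρ σ) ∘ Fin.natAdd p) ∘ σ.symm = w ∘ Fin.natAdd p := by
    ext; simp
  simp only [Finset.mem_filter_univ, coe_mulRight]
  rw [HasPattern, HasPattern, hl, hr, isShuffle_iff]

theorem mrMulBilin_mrBasisMul_single {p q r : ℕ} (ρ : Perm (Fin p)) (σ : Perm (Fin q))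
    (τ : Perm (Fin r)) :
    mrMulBilin k (mrBasisMul k ⟨p, ρ⟩ ⟨q, σ⟩) (single ⟨r, τ⟩ 1) =
      ∑ s ∈ univ.filter (fun s : Perm (Fin (p + q + r)) =>
          (HasPattern (s ∘ Fin.castAdd r ∘ Fin.castAdd q) ρ ∧
            HasPattern (s ∘ Fin.castAdd r ∘ Fin.natAdd p) σ) ∧
          HasPattern (s ∘ Fin.natAdd (p + q)) τ),
        single ⟨p + q + r, s⟩ 1 := by
  rw [mrBasisMul_eq_sum_hasPattern, map_sum, LinearMap.sum_apply]
  simp_rw [mrMulBilin_single_single, mrBasisMul_eq_sum_hasPattern]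
  rw [sum_filter_sum_filter_hasPattern (Fin.castAdd_injective _ _) _ _ _ fun _ _ => Iff.rfl]
  refine sum_congr (filter_congr fun s _ => and_congr_left' ?_) fun _ _ => rfl
  have h := hasPattern_sort (s.injective.comp (Fin.castAdd_injective (p + q) r))
  exact and_congr (h.comp_iff _ ρ) (h.comp_iff _ σ)

theorem mrMulBilin_single_mrBasisMul {p q r : ℕ} (ρ : Perm (Fin p)) (σ : Perm (Fin q))
    (τ : Perm (Fin r)) :
    mrMulBilin k (single ⟨p, ρ⟩ 1) (mrBasisMul k ⟨q, σ⟩ ⟨r, τ⟩) =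
      ∑ s ∈ univ.filter (fun s : Perm (Fin (p + (q + r))) =>
          (HasPattern (s ∘ Fin.natAdd p ∘ Fin.castAdd r) σ ∧
            HasPattern (s ∘ Fin.natAdd p ∘ Fin.natAdd q) τ) ∧
          HasPattern (s ∘ Fin.castAdd (q + r)) ρ),
        single ⟨p + (q + r), s⟩ 1 := by
  rw [mrBasisMul_eq_sum_hasPattern, map_sum]
  simp_rw [mrMulBilin_single_single, mrBasisMul_eq_sum_hasPattern]
  rw [sum_filter_sum_filter_hasPattern (Fin.natAdd_injective _ _) _
    (fun s => HasPattern (s ∘ Fin.castAdd (q + r)) ρ) _ fun _ _ => and_comm]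
  refine sum_congr (filter_congr fun s _ => and_congr_left' ?_) fun _ _ => rfl
  have h := hasPattern_sort (s.injective.comp (Fin.natAdd_injective (q + r) p))
  exact and_congr (h.comp_iff _ σ) (h.comp_iff _ τ)

theorem mrBasisMul_assoc {p q r : ℕ} (ρ : Perm (Fin p)) (σ : Perm (Fin q))
    (τ : Perm (Fin r)) :
    mrMulBilin k (mrBasisMul k ⟨p, ρ⟩ ⟨q, σ⟩) (single ⟨r, τ⟩ 1) =
      mrMulBilin k (single ⟨p, ρ⟩ 1) (mrBasisMul k ⟨q, σ⟩ ⟨r, τ⟩) := by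
  have h : p + (q + r) = p + q + r := (add_assoc p q r).symm
  rw [mrMulBilin_mrBasisMul_single, mrMulBilin_single_mrBasisMul]
  refine (sum_equiv ((finCongr h).permCongr) (fun s => ?_)
    fun s _ => single_sigma_cast k h s 1).symm
  set t := (finCongr h).permCongr s
  have h₁ : ⇑t ∘ Fin.castAdd r ∘ Fin.castAdd q =
      Fin.cast h ∘ s ∘ Fin.castAdd (q + r) := by
    ext; simp [t, permCongr_apply, Fin.castAdd_castAdd]
  have h₂ : ⇑t ∘ Fin.castAdd r ∘ Fin.natAdd p =
      Fin.cast h ∘ s ∘ Fin.natAdd p ∘ Fin.castAdd r := by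
    ext; simp [t, permCongr_apply, Fin.castAdd_natAdd]
  have h₃ : ⇑t ∘ Fin.natAdd (p + q) = Fin.cast h ∘ s ∘ Fin.natAdd p ∘ Fin.natAdd q := by
    ext; simp [t, permCongr_apply, Fin.natAdd_natAdd]
  have hcast : StrictMono (Fin.cast h) := fun _ _ hab => hab
  simp only [mem_filter_univ, h₁, h₂, h₃, hasPattern_comp_iff hcast]
  tauto

theorem mrMulBilin_assoc (f g h : MR k) :
    mrMulBilin k (mrMulBilin k f g) h = mrMulBilin k f (mrMulBilin k g h) := by
  have key : (mrMulBilin k).compr₂ (mrMulBilin k) =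
      (LinearMap.llcomp k _ _ _ ∘ₗ mrMulBilin k).compl₂ (mrMulBilin k) := by
    ext ⟨p, ρ⟩ ⟨q, σ⟩ ⟨r, τ⟩ : 6
    simpa [mrMulBilin_single_single] using mrBasisMul_assoc k ρ σ τ
  exact LinearMap.congr_fun (LinearMap.congr_fun₂ key f g) h

theorem mrBasisMul_one_left {n : ℕ} (π : Perm (Fin n)) :
    mrBasisMul k ⟨0, 1⟩ ⟨n, π⟩ = single ⟨n, π⟩ 1 := by
  have hshuffle : (univ.filter fun w : Perm (Fin (0 + n)) => IsShuffle 0 w) = {1} := by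
    ext w; simp [isShuffle_zero_iff]
  rw [mrBasisMul, hshuffle, sum_singleton, one_mul, single_sigma_cast k (zero_add n)]
  congr
  ext x
  have hx : Fin.cast (zero_add n).symm x = Fin.natAdd 0 x := Fin.ext (by simp)
  rw [permCongr_apply, finCongr_symm, finCongr_apply, finCongr_apply, Fin.val_cast, hx]
  exact (congrArg Fin.val (blockPerm_natAdd (1 : Perm (Fin 0)) π x)).trans (zero_add _)

theorem mrBasisMul_one_right {n : ℕ} (π : Perm (Fin n)) :
    mrBasisMul k ⟨n, π⟩ ⟨0, 1⟩ = single ⟨n, π⟩ 1 := by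
  have hshuffle : (univ.filter fun w : Perm (Fin (n + 0)) => IsShuffle n w) = {1} := by
    ext w; simp [isShuffle_self_iff]
  rw [mrBasisMul, hshuffle, sum_singleton, one_mul]
  congr
  ext x
  exact congrArg Fin.val (blockPerm_castAdd π (1 : Perm (Fin 0)) x)

theorem mrMulBilin_one_left : mrMulBilin k (single ⟨0, 1⟩ 1) = LinearMap.id := by
  ext ⟨n, π⟩ : 2
  simp [mrMulBilin_single_single, mrBasisMul_one_left]

theorem mrMulBilin_one_right : (mrMulBilin k).flip (single ⟨0, 1⟩ 1) = LinearMap.id := by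
  ext ⟨n, π⟩ : 2
  simp [mrMulBilin_single_single, mrBasisMul_one_right]

end Product

theorem mrMul_assoc_and_unit_general (k : Type*) [Field k] :
    (∀ f g h : MR k, mrMul k (mrMul k f g) h = mrMul k f (mrMul k g h)) ∧
    (∀ f : MR k,
      mrMul k (Finsupp.single ⟨0, (1 : Equiv.Perm (Fin 0))⟩ (1 : k)) f = f ∧
      mrMul k f (Finsupp.single ⟨0, (1 : Equiv.Perm (Fin 0))⟩ (1 : k)) = f) := by
  simp only [mrMul_eq_mrMulBilin]
  refine ⟨mrMulBilin_assoc k, fun f => ⟨?_, ?_⟩⟩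
  · exact LinearMap.congr_fun (mrMulBilin_one_left k) f
  · exact LinearMap.congr_fun (mrMulBilin_one_right k) f

/-- the Malvenuto-Reutenauer product on `k[S^∞]` is associative and the
empty permutation (the unique element of `S_0`) is a two-sided unit for it. -/
theorem mrMul_assoc_and_unit (k : Type*) [Field k] [CharZero k] :
    (∀ f g h : MR k, mrMul k (mrMul k f g) h = mrMul k f (mrMul k g h)) ∧
    (∀ f : MR k,
      mrMul k (Finsupp.single ⟨0, (1 : Equiv.Perm (Fin 0))⟩ (1 : k)) f = f ∧
      mrMul k f (Finsupp.single ⟨0, (1 : Equiv.Perm (Fin 0))⟩ (1 : k)) = f) :=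
  mrMul_assoc_and_unit_general k
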